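/- Let M be a linear matroid given by vectors in F^d, let F₀ ⊆ ground set be a subset whose span is a proper flat, and let g = Σ_{h ∈ F₀} x_h h be a linear combination with coefficients x_h ∈ F. Suppose for every independent set I of M that does not span F₀, the set I ∪ {g} is linearly independent. Then g is in general position on the flat spanned by F₀: for every flat F' of the matroid obtained by adding g, if g ∈ span(F' \ {g}) then span(F₀) ⊆ span(F'). -/

import Mathlib

/-- A set of ground elements is a flat if it contains every element whose vector
lies in its span. -/
def IsVecFlat (F : Type*) [Field F] {ι V : Type*} [AddCommGroup V] [Module F V]
    (ψ : ι → V) (Fl : Set ι) : Prop :=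
  ∀ w : ι, ψ w ∈ Submodule.span F (ψ '' Fl) → w ∈ Fl

/-- Let `M` be a linear matroid given by a finite family of vectors `φ`, `F₀` a subset of
the ground set, and `g` a vector in the span of `F₀`. If for every independent set `I`
not spanning `F₀` the vector `g` extends `I` to an independent set (i.e. `g` is outside
the span of `I`), then `g` is in general position on the flat spanned by `F₀`: in the
matroid extended by `g`, every flat `F'` whose remaining elements span `g` satisfies
`span(F₀) ⊆ span(F')`. -/
theorem general_position_of_extends_independents {F : Type*} [Field F] {ι : Type*}
    [Finite ι] {d : ℕ} (φ : ι → (Fin d → F)) (F0 : Set ι)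
    (g : Fin d → F) (hg : g ∈ Submodule.span F (φ '' F0))
    (hext : ∀ I : Set ι, LinearIndependent F (fun i : I => φ (i : ι)) →
      ¬ (∀ h ∈ F0, φ h ∈ Submodule.span F (φ '' I)) →
      g ∉ Submodule.span F (φ '' I)) :
    ∀ F' : Set (ι ⊕ Unit),
      IsVecFlat F (Sum.elim φ (fun _ => g)) F' →
      g ∈ Submodule.span F ((Sum.elim φ (fun _ => g)) '' (F' \ {Sum.inr ()})) →
      Submodule.span F (φ '' F0) ≤
        Submodule.span F ((Sum.elim φ (fun _ => g)) '' F') := by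
  intro F' _hflat hgsp
  set ψ := Sum.elim φ (fun _ => g) with hψ
  set J : Set ι := {i | Sum.inl i ∈ F'} with hJ
  -- ψ '' (F' \ {inr ()}) ⊆ φ '' J
  have hsub : ψ '' (F' \ {Sum.inr ()}) ⊆ φ '' J := by
    rintro v ⟨x, ⟨hxF, hxne⟩, rfl⟩
    cases x with
    | inl i => exact ⟨i, hxF, rfl⟩
    | inr u => exact absurd rfl hxne
  have hgJ : g ∈ Submodule.span F (φ '' J) :=
    Submodule.span_mono hsub hgsp
  -- φ '' J ⊆ ψ '' F'
  have hJF' : φ '' J ⊆ ψ '' F' := by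
    rintro v ⟨i, hi, rfl⟩
    exact ⟨Sum.inl i, hi, rfl⟩
  -- choose a linearly independent subset of φ '' J with the same span
  obtain ⟨b, hbsub, hbspan, hbind⟩ := exists_linearIndependent F (φ '' J)
  -- pick preimages
  have hchoice : ∀ v ∈ b, ∃ i, i ∈ J ∧ φ i = v := by
    intro v hv
    obtain ⟨i, hi, rfl⟩ := hbsub hv
    exact ⟨i, hi, rfl⟩
  classical
  choose f hfJ hfφ using hchoice
  set I : Set ι := {i | ∃ v, ∃ hv : v ∈ b, f v hv = i} with hI
  have hφI : φ '' I = b := by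
    ext v
    constructor
    · rintro ⟨i, ⟨w, hw, rfl⟩, rfl⟩
      rw [hfφ w hw]; exact hw
    · intro hv
      exact ⟨f v hv, ⟨v, hv, rfl⟩, hfφ v hv⟩
  have hinjOn : Set.InjOn φ I := by
    rintro i ⟨v, hv, rfl⟩ j ⟨w, hw, rfl⟩ hij
    have : v = w := by rw [← hfφ v hv, ← hfφ w hw, hij]
    subst this
    rfl
  have hindI : LinearIndependent F (fun i : I => φ (i : ι)) := by
    change LinearIndepOn F φ I
    rw [linearIndepOn_iff_image hinjOn]
    rw [hφI]
    exact hbind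
  have hgI : g ∈ Submodule.span F (φ '' I) := by
    rw [hφI, hbspan]; exact hgJ
  -- apply hext contrapositively
  by_cases hspan : ∀ h ∈ F0, φ h ∈ Submodule.span F (φ '' I)
  · -- span(F0) ≤ span(φ '' I) ≤ span(φ '' J) ≤ span(ψ '' F')
    have h1 : Submodule.span F (φ '' F0) ≤ Submodule.span F (φ '' I) := by
      rw [Submodule.span_le]
      rintro v ⟨h, hh, rfl⟩
      exact hspan h hh
    have h2 : Submodule.span F (φ '' I) ≤ Submodule.span F (ψ '' F') := by
      rw [hφI, hbspan]
      exact Submodule.span_mono hJF'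
    exact h1.trans h2
  · exact absurd hgI (hext I hindI hspan)
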